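/- Let 𝔊 = (G = (V,E), ◇T, ψ_pers(Λ)) be a reachability game augmented with persistent live groups, let (S, C, R) ∈ Λ, and let A ⊆ V be a set of vertices each of which is winning for Player 0 in 𝔊. Let B be the winning region of Player 0 in the (non-augmented) game (G|_C, ◇A ∨ □(S∖R)). Then every vertex of B is winning for Player 0 in 𝔊. -/

import Mathlib

universe u

/-- A two-player game graph: finite-intended vertex set `V`, an ownership function
(`owner v = 0` means `v` is a Player-0 vertex, `owner v = 1` a Player-1 vertex),
and an edge relation such that every vertex has at least one outgoing edge. -/
structure GameGraph (V : Type u) where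
  owner : V → Fin 2
  E : V → V → Prop
  exists_succ : ∀ v, ∃ w, E v w

variable {V : Type u}

/-- A play of the game graph: an infinite sequence of vertices following edges. -/
def IsPlay (G : GameGraph V) (ρ : ℕ → V) : Prop :=
  ∀ k, G.E (ρ k) (ρ (k + 1))

/-- A (history-dependent) strategy: given the list of previously visited
vertices and the current vertex, it chooses a next vertex. -/
abbrev Strategy (V : Type u) := List V → V → V

/-- A strategy of Player `i` is valid if at each Player-`i` vertex it chooses
an edge of the game graph. -/
def StratValid (G : GameGraph V) (i : Fin 2) (σ : Strategy V) : Prop :=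
  ∀ (h : List V) (v : V), G.owner v = i → G.E v (σ h v)

/-- A positional (memoryless) strategy ignores the history. -/
def Positional (σ : Strategy V) : Prop :=
  ∀ (h h' : List V) (v : V), σ h v = σ h' v

/-- A play is compliant with the strategy `σ` of Player `i` (a `σ`-play) if at
every Player-`i` vertex it moves to the vertex chosen by `σ`. -/
def Compliant (G : GameGraph V) (i : Fin 2) (σ : Strategy V) (ρ : ℕ → V) : Prop :=
  ∀ k, G.owner (ρ k) = i → ρ (k + 1) = σ (List.ofFn fun j : Fin k => ρ j.val) (ρ k)

/-- `σ` is a winning strategy for Player `i` from `v`, where `W` is the set of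
plays that are winning for Player `i`. -/
def WinsFrom (G : GameGraph V) (i : Fin 2) (W : Set (ℕ → V)) (σ : Strategy V) (v : V) : Prop :=
  StratValid G i σ ∧
    ∀ ρ : ℕ → V, IsPlay G ρ → Compliant G i σ ρ → ρ 0 = v → ρ ∈ W

/-- The winning region of Player `i`: the vertices from which Player `i` has a
winning strategy. -/
def WinRegion (G : GameGraph V) (i : Fin 2) (W : Set (ℕ → V)) : Set V :=
  {v | ∃ σ, WinsFrom G i W σ v}

/-- A vertex occurs infinitely often along a play. -/
def InfOft (ρ : ℕ → V) (v : V) : Prop := ∀ n, ∃ k, n ≤ k ∧ ρ k = v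

/-- An edge is taken infinitely often along a play. -/
def EdgeInfOft (ρ : ℕ → V) (e : V × V) : Prop :=
  ∀ n, ∃ k, n ≤ k ∧ ρ k = e.1 ∧ ρ (k + 1) = e.2

/-- Parity objective: the maximal priority occurring infinitely often is even. -/
def ParityWin (P : V → ℕ) (ρ : ℕ → V) : Prop :=
  ∃ v, InfOft ρ v ∧ Even (P v) ∧ ∀ w, InfOft ρ w → P w ≤ P v

/-- The set of source vertices of a set of edges. -/
def srcSet (H : Set (V × V)) : Set V := {u | ∃ w, (u, w) ∈ H}

/-- A persistent live group: a triple `(S, C, R)` of a source region `S`, a set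
`C` of (Player-0-sourced) edges, and a target region `R ⊆ S`. -/
abbrev PersGroup (V : Type u) := Set V × Set (V × V) × Set V

/-- Well-formedness of a persistent live group `(S, C, R)` over `G`:
`R ⊆ S ⊆ V` and `C ⊆ E` consists of edges with Player-0 sources. -/
def persWF (G : GameGraph V) (g : PersGroup V) : Prop :=
  g.2.2 ⊆ g.1 ∧ ∀ e ∈ g.2.1, G.E e.1 e.2 ∧ G.owner e.1 = 0

/-- A play satisfies `ψ_pers(S, C, R)` iff for every position `n`: if from `n`
on the play stays in `S` and always takes an edge of `C` whenever it is at a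
source of `C`, then the play visits `R` at some position `≥ n`. -/
def psiPersOne (S : Set V) (C : Set (V × V)) (R : Set V) (ρ : ℕ → V) : Prop :=
  ∀ n : ℕ,
    (∀ m2, n ≤ m2 → ρ m2 ∈ S ∧ (ρ m2 ∈ srcSet C → (ρ m2, ρ (m2 + 1)) ∈ C)) →
      ∃ m2, n ≤ m2 ∧ ρ m2 ∈ R

/-- The assumption `ψ_pers(Λ)` induced by a set `Λ` of persistent live groups. -/
def psiPers (Λ : Set (PersGroup V)) (ρ : ℕ → V) : Prop :=
  ∀ g ∈ Λ, psiPersOne g.1 g.2.1 g.2.2 ρ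

/-- `σ` is a winning strategy for Player `i` from `v` in the game over the edge
relation `Erel` (with the given ownership function), where `W` is the set of
plays winning for Player `i`. -/
def WinsFromRel (Erel : V → V → Prop) (owner : V → Fin 2) (i : Fin 2)
    (W : Set (ℕ → V)) (σ : Strategy V) (v : V) : Prop :=
  (∀ (h : List V) (u : V), owner u = i → Erel u (σ h u)) ∧
    ∀ ρ : ℕ → V, (∀ n, Erel (ρ n) (ρ (n + 1))) →
      (∀ n, owner (ρ n) = i →
        ρ (n + 1) = σ (List.ofFn fun j : Fin n => ρ j.val) (ρ n)) →
      ρ 0 = v → ρ ∈ W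

/-- The winning region of Player `i` in the game over the edge relation `Erel`. -/
def WinRegionRel (Erel : V → V → Prop) (owner : V → Fin 2) (i : Fin 2)
    (W : Set (ℕ → V)) : Set V :=
  {v | ∃ σ, WinsFromRel Erel owner i W σ v}

/-- The edge relation of the restricted game graph `G|_C`: an edge `(u,v)` of
`E` is kept iff `(u,v) ∈ C` or `u` is not the source of any edge of `C`. -/
def ErestC (G : GameGraph V) (C : Set (V × V)) : V → V → Prop :=
  fun u v => G.E u v ∧ ((u, v) ∈ C ∨ u ∉ srcSet C)

/-!
Play the `G|_C` strategy until the first visit to `A`, then switch to a winning strategy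
of `𝔊` from that vertex. Since the sources of `C` belong to Player 0, a play that never
reaches `A` is a play of `G|_C`, so it stays in `S ∖ R` forever while always taking
`C`-edges at sources of `C`; it thus violates `ψ_pers(S, C, R)` and is won vacuously.
A play that reaches `A` is won because `ψ_pers(Λ)` is preserved by taking suffixes.
-/

section Switching

variable {G : GameGraph V} {i : Fin 2} {W : Set (ℕ → V)} {A : Set V}
  {F : V → Strategy V} {σ : Strategy V} {v : V} {ρ : ℕ → V}

open Classical

/-- Follow `σ` until the history (current vertex included) meets `A`, then follow `F a`
from the first vertex `a ∈ A`, fed with the history since that visit. -/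
noncomputable def switchAt (A : Set V) (F : V → Strategy V) (σ : Strategy V) : Strategy V :=
  fun h u =>
    let l := h ++ [u]
    let k := l.findIdx fun x => decide (x ∈ A)
    if hk : k < l.length then F l[k] (h.drop k) u else σ h u

lemma ofFn_append_singleton (ρ : ℕ → V) (n : ℕ) :
    (List.ofFn fun j : Fin n => ρ j.val) ++ [ρ n] = List.ofFn fun j : Fin (n + 1) => ρ j.val := by
  rw [List.ofFn_succ_last]
  rfl

lemma switchAt_eq_of_forall_notMem {n : ℕ} (h : ∀ j ≤ n, ρ j ∉ A) :
    switchAt A F σ (List.ofFn fun j : Fin n => ρ j.val) (ρ n)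
      = σ (List.ofFn fun j : Fin n => ρ j.val) (ρ n) := by
  refine dif_neg fun hk => ?_
  obtain ⟨x, hx, hxA⟩ := List.findIdx_lt_length.1 hk
  rw [ofFn_append_singleton, List.mem_ofFn] at hx
  obtain ⟨j, rfl⟩ := hx
  exact h j (Nat.lt_succ_iff.1 j.isLt) (of_decide_eq_true hxA)

lemma switchAt_eq_of_first {n₀ : ℕ} (h₀ : ρ n₀ ∈ A) (hmin : ∀ j < n₀, ρ j ∉ A) (m : ℕ) :
    switchAt A F σ (List.ofFn fun j : Fin (n₀ + m) => ρ j.val) (ρ (n₀ + m))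
      = F (ρ n₀) (List.ofFn fun j : Fin m => ρ (n₀ + j.val)) (ρ (n₀ + m)) := by
  have hlen : n₀ < (List.ofFn fun j : Fin (n₀ + m + 1) => ρ j.val).length := by simp
  have hfirst : (List.ofFn fun j : Fin (n₀ + m + 1) => ρ j.val).findIdx (fun x => decide (x ∈ A))
      = n₀ := by
    rw [List.findIdx_eq hlen]
    simp only [List.getElem_ofFn, decide_eq_true_eq, decide_eq_false_iff_not]
    exact ⟨h₀, fun j hj => hmin j hj⟩
  have hdrop : (List.ofFn fun j : Fin (n₀ + m) => ρ j.val).drop n₀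
      = List.ofFn fun j : Fin m => ρ (n₀ + j.val) := by
    rw [List.ofFn_add, List.drop_left' (by simp)]
    rfl
  simp only [switchAt, ofFn_append_singleton, hfirst, dif_pos hlen, List.getElem_ofFn, hdrop]

lemma StratValid.switchAt (hσ : StratValid G i σ) (hF : ∀ a ∈ A, StratValid G i (F a)) :
    StratValid G i (switchAt A F σ) := by
  intro h u hu
  dsimp only [_root_.switchAt]
  split_ifs with hk
  · exact hF _ (of_decide_eq_true (List.findIdx_getElem (w := hk))) _ _ hu
  · exact hσ h u hu

lemma Compliant.of_switchAt_of_forall_notMem (hρ : Compliant G i (switchAt A F σ) ρ)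
    (hA : ∀ n, ρ n ∉ A) : Compliant G i σ ρ := fun n hn =>
  (hρ n hn).trans (switchAt_eq_of_forall_notMem fun j _ => hA j)

lemma Compliant.shift_of_switchAt {n₀ : ℕ} (hρ : Compliant G i (switchAt A F σ) ρ)
    (h₀ : ρ n₀ ∈ A) (hmin : ∀ j < n₀, ρ j ∉ A) :
    Compliant G i (F (ρ n₀)) (fun m => ρ (n₀ + m)) := fun m hm =>
  (hρ (n₀ + m) hm).trans (switchAt_eq_of_first h₀ hmin m)

theorem WinsFrom.switchAt (hW : ∀ ρ n, (fun m => ρ (n + m)) ∈ W → ρ ∈ W)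
    (hF : ∀ a ∈ A, WinsFrom G i W (F a) a)
    (hσ : WinsFrom G i (W ∪ {ρ | ∃ n, ρ n ∈ A}) σ v) :
    WinsFrom G i W (switchAt A F σ) v := by
  refine ⟨hσ.1.switchAt fun a ha => (hF a ha).1, fun ρ hplay hcomp hρ0 => ?_⟩
  by_cases hvisit : ∃ n, ρ n ∈ A
  · have h₀ := Nat.find_spec hvisit
    exact hW ρ _ <| (hF _ h₀).2 _ (fun m => hplay _)
      (hcomp.shift_of_switchAt h₀ fun j => Nat.find_min hvisit) (by simp)
  · simp only [not_exists] at hvisit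
    refine (hσ.2 ρ hplay (hcomp.of_switchAt_of_forall_notMem hvisit) hρ0).resolve_right ?_
    rintro ⟨n, hn⟩
    exact hvisit n hn

theorem exists_winsFrom_of_winsFrom_union (hW : ∀ ρ n, (fun m => ρ (n + m)) ∈ W → ρ ∈ W)
    (hA : ∀ a ∈ A, ∃ τ, WinsFrom G i W τ a) (hσ : WinsFrom G i (W ∪ {ρ | ∃ n, ρ n ∈ A}) σ v) :
    ∃ τ, WinsFrom G i W τ v := by
  have hF : ∀ a, ∃ τ : Strategy V, a ∈ A → WinsFrom G i W τ a := fun a => by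
    by_cases ha : a ∈ A
    · obtain ⟨τ, hτ⟩ := hA a ha
      exact ⟨τ, fun _ => hτ⟩
    · exact ⟨σ, fun h => (ha h).elim⟩
  choose F hF using hF
  exact ⟨switchAt A F σ, hσ.switchAt hW hF⟩

end Switching

lemma WinsFrom.mono {G : GameGraph V} {i : Fin 2} {W W' : Set (ℕ → V)} {σ : Strategy V}
    {v : V} (hσ : WinsFrom G i W σ v) (hW : W ⊆ W') : WinsFrom G i W' σ v :=
  ⟨hσ.1, fun ρ hplay hcomp hρ0 => hW (hσ.2 ρ hplay hcomp hρ0)⟩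

section Restriction

variable {G : GameGraph V} {C : Set (V × V)} {i : Fin 2} {σ : Strategy V}

lemma erestC_of_compliant (hsrc : ∀ u ∈ srcSet C, G.owner u = i)
    (hσ : ∀ h u, G.owner u = i → ErestC G C u (σ h u)) {ρ : ℕ → V} (hplay : IsPlay G ρ)
    (hcomp : Compliant G i σ ρ) (n : ℕ) : ErestC G C (ρ n) (ρ (n + 1)) := by
  by_cases hn : G.owner (ρ n) = i
  · rw [hcomp n hn]
    exact hσ _ _ hn
  · exact ⟨hplay n, Or.inr fun hs => hn (hsrc _ hs)⟩

theorem WinsFromRel.winsFrom_inter (hsrc : ∀ u ∈ srcSet C, G.owner u = i) {W : Set (ℕ → V)}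
    {v : V} (hσ : WinsFromRel (ErestC G C) G.owner i W σ v) :
    WinsFrom G i (W ∩ {ρ | ∀ n, ErestC G C (ρ n) (ρ (n + 1))}) σ v := by
  refine ⟨fun h u hu => (hσ.1 h u hu).1, fun ρ hplay hcomp hρ0 => ?_⟩
  have hrest := erestC_of_compliant hsrc hσ.1 hplay hcomp
  exact ⟨hσ.2 ρ hrest hcomp hρ0, hrest⟩

end Restriction

lemma not_psiPersOne_of_forall_mem_diff {G : GameGraph V} {S R : Set V} {C : Set (V × V)}
    {ρ : ℕ → V} (hrest : ∀ n, ErestC G C (ρ n) (ρ (n + 1))) (hSR : ∀ n, ρ n ∈ S \ R) :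
    ¬ psiPersOne S C R ρ := fun hψ => by
  obtain ⟨m, -, hm⟩ := hψ 0 fun m _ =>
    ⟨(hSR m).1, fun hs => (hrest m).2.resolve_right (not_not.2 hs)⟩
  exact (hSR m).2 hm

lemma psiPers.shift {Λ : Set (PersGroup V)} {ρ : ℕ → V} (h : psiPers Λ ρ) (n₀ : ℕ) :
    psiPers Λ (fun m => ρ (n₀ + m)) := by
  intro g hg n hn
  obtain ⟨m, hm, hR⟩ := h g hg (n₀ + n) fun m hm => by
    obtain ⟨k, rfl⟩ := Nat.exists_eq_add_of_le (le_trans (Nat.le_add_right n₀ n) hm)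
    exact hn k (by omega)
  obtain ⟨k, rfl⟩ := Nat.exists_eq_add_of_le (le_trans (Nat.le_add_right n₀ n) hm)
  exact ⟨k, by omega, hR⟩

lemma psiPers_imp_exists_mem_of_shift {Λ : Set (PersGroup V)} {T : Set V} (ρ : ℕ → V) (n₀ : ℕ)
    (h : psiPers Λ (fun m => ρ (n₀ + m)) → ∃ n, ρ (n₀ + n) ∈ T) :
    psiPers Λ ρ → ∃ n, ρ n ∈ T := fun hψ =>
  (h (hψ.shift n₀)).elim fun n hn => ⟨n₀ + n, hn⟩

theorem stmt14_general (V : Type) (G : GameGraph V)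
    (T : Set V) (Λ : Set (PersGroup V)) (hΛ : ∀ g ∈ Λ, persWF G g)
    (S : Set V) (C : Set (V × V)) (R : Set V) (hmem : (S, C, R) ∈ Λ)
    (A : Set V)
    (hA : ∀ v ∈ A, ∃ σ : Strategy V,
      WinsFrom G 0 {ρ | psiPers Λ ρ → ∃ n, ρ n ∈ T} σ v) :
    ∀ v ∈ WinRegionRel (ErestC G C) G.owner 0
        {ρ | (∃ n, ρ n ∈ A) ∨ ∀ n, ρ n ∈ S \ R},
      ∃ σ : Strategy V, WinsFrom G 0 {ρ | psiPers Λ ρ → ∃ n, ρ n ∈ T} σ v := by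
  rintro v ⟨σ, hσ⟩
  have hsrc : ∀ u ∈ srcSet C, G.owner u = 0 := fun u ⟨w, hw⟩ => ((hΛ _ hmem).2 (u, w) hw).2
  refine exists_winsFrom_of_winsFrom_union (psiPers_imp_exists_mem_of_shift (T := T)) hA
    ((hσ.winsFrom_inter hsrc).mono ?_)
  rintro ρ ⟨hreach | hSR, hrest⟩
  · exact Or.inr hreach
  · exact Or.inl fun hψ => (not_psiPersOne_of_forall_mem_diff hrest hSR (hψ _ hmem)).elim

/-- Let `𝔊 = (G, ◇T, ψ_pers(Λ))` be a reachability game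
augmented with persistent live groups, let `(S, C, R) ∈ Λ`, and let `A ⊆ V` be
a set of vertices each of which is winning for Player 0 in `𝔊`.  Let `B` be
the winning region of Player 0 in the non-augmented game
`(G|_C, ◇A ∨ □(S∖R))`.  Then every vertex of `B` is winning for Player 0 in
`𝔊`. -/
theorem stmt14 (V : Type) [Fintype V] (G : GameGraph V)
    (T : Set V) (Λ : Set (PersGroup V)) (hΛ : ∀ g ∈ Λ, persWF G g)
    (S : Set V) (C : Set (V × V)) (R : Set V) (hmem : (S, C, R) ∈ Λ)
    (A : Set V)
    (hA : ∀ v ∈ A, ∃ σ : Strategy V,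
      WinsFrom G 0 {ρ | psiPers Λ ρ → ∃ n, ρ n ∈ T} σ v) :
    ∀ v ∈ WinRegionRel (ErestC G C) G.owner 0
        {ρ | (∃ n, ρ n ∈ A) ∨ ∀ n, ρ n ∈ S \ R},
      ∃ σ : Strategy V, WinsFrom G 0 {ρ | psiPers Λ ρ → ∃ n, ρ n ∈ T} σ v :=
  stmt14_general V G T Λ hΛ S C R hmem A hA
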